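/- If P and Q are orthogonal projections in C^{n×n}, then P∨Q = P + Q − P₀, where P₀ is the orthogonal projection onto R(P) ∩ R(Q). -/

import Mathlib

open scoped Matrix Matrix.Norms.L2Operator ComplexOrder

/-- The square root of a positive semidefinite matrix, as `Matrix.PosSemidef.sqrt` was defined in
Mathlib of December 2024 (since removed). -/
noncomputable def Matrix.PosSemidef.sqrt {n : Type*} [Fintype n] [DecidableEq n] {𝕜 : Type*}
    [RCLike 𝕜] {A : Matrix n n 𝕜} (hA : A.PosSemidef) : Matrix n n 𝕜 :=
  hA.1.eigenvectorUnitary.1 * Matrix.diagonal ((↑) ∘ (√·) ∘ hA.1.eigenvalues) *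
    (star hA.1.eigenvectorUnitary : Matrix n n 𝕜)

/-- `MPInv A B` means `B` is the Moore-Penrose inverse of `A`. -/
def MPInv {n : ℕ} (A B : Matrix (Fin n) (Fin n) ℂ) : Prop :=
  A * B * A = A ∧ B * A * B = B ∧ (A * B).IsHermitian ∧ (B * A).IsHermitian

namespace SupProjAux

variable {n : ℕ} {S : Matrix (Fin n) (Fin n) ℂ} (hS : S.PosSemidef)

lemma eq_of_mulVec_eq {A B : Matrix (Fin n) (Fin n) ℂ} (h : ∀ v, A *ᵥ v = B *ᵥ v) : A = B := by
  ext i j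
  have := congrFun (h (Pi.single j 1)) i
  simpa [Matrix.mulVec_single] using this

lemma psd_zero_of_add_eq_zero {A B : Matrix (Fin n) (Fin n) ℂ} (hA : A.PosSemidef)
    (hB : B.PosSemidef) (h : A + B = 0) : A = 0 := by
  apply eq_of_mulVec_eq; intro v
  rw [Matrix.zero_mulVec]
  apply (hA.dotProduct_mulVec_zero_iff v).mp
  have h3 : star v ⬝ᵥ A *ᵥ v + star v ⬝ᵥ B *ᵥ v = 0 := by
    rw [← dotProduct_add, ← Matrix.add_mulVec, h, Matrix.zero_mulVec,
      dotProduct_zero]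
  exact le_antisymm ((eq_neg_of_add_eq_zero_left h3) ▸ neg_nonpos.mpr (hB.dotProduct_mulVec_nonneg v)) (hA.dotProduct_mulVec_nonneg v)

lemma herm_proj_psd {A : Matrix (Fin n) (Fin n) ℂ} (h : A.IsHermitian) (h2 : A * A = A) :
    A.PosSemidef := by
  have e : Aᴴ * A = A := by rw [h.eq, h2]
  exact e ▸ Matrix.posSemidef_conjTranspose_mul_self A

lemma star_half : star ((2:ℂ)⁻¹) = (2:ℂ)⁻¹ := by
  simp [Complex.star_def, map_inv₀]

lemma half_nonneg : (0:ℂ) ≤ (2:ℂ)⁻¹ := by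
  rw [Complex.le_def]
  norm_num

lemma psd_half {A : Matrix (Fin n) (Fin n) ℂ} (hA : A.PosSemidef) :
    ((2:ℂ)⁻¹ • A).PosSemidef := by
  refine Matrix.PosSemidef.of_dotProduct_mulVec_nonneg ?_ ?_
  · rw [Matrix.IsHermitian, Matrix.conjTranspose_smul, star_half, hA.1.eq]
  · intro x
    rw [Matrix.smul_mulVec, dotProduct_smul, smul_eq_mul]
    exact mul_nonneg half_nonneg (hA.dotProduct_mulVec_nonneg x)

open scoped MatrixOrder in
lemma psd_eq_of_sq_eq_sq {A B : Matrix (Fin n) (Fin n) ℂ} (hA : A.PosSemidef)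
    (hB : B.PosSemidef) (h : A ^ 2 = B ^ 2) : A = B :=
  (CFC.sq_eq_sq_iff A B hA.nonneg hB.nonneg).mp h

lemma mpInv_unique {A B C : Matrix (Fin n) (Fin n) ℂ} (hB : MPInv A B) (hC : MPInv A C) :
    B = C := by
  obtain ⟨hB1, hB2, hB3, hB4⟩ := hB
  obtain ⟨hC1, hC2, hC3, hC4⟩ := hC
  have hAB : A * B = A * C := by
    calc A * B = (A * C * A) * B := by rw [hC1]
    _ = (A * C) * (A * B) := by noncomm_ring
    _ = (A * C)ᴴ * (A * B)ᴴ := by rw [hC3.eq, hB3.eq]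
    _ = Cᴴ * ((A * B * A)ᴴ) := by
        simp only [Matrix.conjTranspose_mul]; noncomm_ring
    _ = Cᴴ * Aᴴ := by rw [hB1]
    _ = (A * C)ᴴ := by rw [Matrix.conjTranspose_mul]
    _ = A * C := hC3.eq
  have hBA : B * A = C * A := by
    calc B * A = B * (A * C * A) := by rw [hC1]
    _ = (B * A) * (C * A) := by noncomm_ring
    _ = (B * A)ᴴ * (C * A)ᴴ := by rw [hB4.eq, hC4.eq]
    _ = ((A * B * A)ᴴ) * Cᴴ := by
        simp only [Matrix.conjTranspose_mul]; noncomm_ring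
    _ = Aᴴ * Cᴴ := by rw [hB1]
    _ = (C * A)ᴴ := by rw [Matrix.conjTranspose_mul]
    _ = C * A := hC4.eq
  calc B = B * A * B := hB2.symm
  _ = B * (A * C) := by rw [← hAB]; noncomm_ring
  _ = (B * A) * C := by noncomm_ring
  _ = (C * A) * C := by rw [hBA]
  _ = C := hC2

noncomputable def Cf (hS : S.PosSemidef) (f : ℝ → ℂ) : Matrix (Fin n) (Fin n) ℂ :=
  (hS.1.eigenvectorUnitary : Matrix (Fin n) (Fin n) ℂ) *
    Matrix.diagonal (f ∘ hS.1.eigenvalues) *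
    star (hS.1.eigenvectorUnitary : Matrix (Fin n) (Fin n) ℂ)

lemma Cf_mul (f g : ℝ → ℂ) : Cf hS f * Cf hS g = Cf hS (fun r => f r * g r) := by
  unfold Cf
  set U := (hS.1.eigenvectorUnitary : Matrix (Fin n) (Fin n) ℂ) with hU
  simp only [Matrix.mul_assoc]
  rw [← Matrix.mul_assoc (star U) U, Matrix.UnitaryGroup.star_mul_self, Matrix.one_mul,
    ← Matrix.mul_assoc (Matrix.diagonal _) (Matrix.diagonal _), Matrix.diagonal_mul_diagonal]
  rfl

lemma Cf_eq {f g : ℝ → ℂ} (h : ∀ i, f (hS.1.eigenvalues i) = g (hS.1.eigenvalues i)) :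
    Cf hS f = Cf hS g := by
  unfold Cf
  rw [show f ∘ hS.1.eigenvalues = g ∘ hS.1.eigenvalues from funext h]

lemma Cf_id : Cf hS (fun r => (r : ℂ)) = S := by
  conv_rhs => rw [hS.1.spectral_theorem]
  rfl

lemma Cf_herm {f : ℝ → ℂ} (h : ∀ r, star (f r) = f r) : (Cf hS f).IsHermitian := by
  unfold Cf
  have hd : star (f ∘ hS.1.eigenvalues) = (f ∘ hS.1.eigenvalues) := funext fun i => h _
  rw [Matrix.IsHermitian, Matrix.conjTranspose_mul, Matrix.conjTranspose_mul,
    Matrix.diagonal_conjTranspose, hd, ← Matrix.star_eq_conjTranspose,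
    ← Matrix.star_eq_conjTranspose, star_star, Matrix.mul_assoc]

lemma Cf_psd {f : ℝ → ℂ} (h : ∀ r, 0 ≤ f r) : (Cf hS f).PosSemidef := by
  unfold Cf
  have := (Matrix.posSemidef_diagonal_iff.mpr
    (fun i => h (hS.1.eigenvalues i))).mul_mul_conjTranspose_same
    (hS.1.eigenvectorUnitary : Matrix (Fin n) (Fin n) ℂ)
  rwa [← Matrix.star_eq_conjTranspose] at this

noncomputable def pinv : ℝ → ℂ := fun r => if r = 0 then 0 else (r:ℂ)⁻¹
noncomputable def sqf : ℝ → ℂ := fun r => (Real.sqrt r : ℂ)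
noncomputable def gf : ℝ → ℂ := fun r => if r = 0 then 0 else ((Real.sqrt r : ℂ))⁻¹

lemma mp_pinv : MPInv S (Cf hS pinv) := by
  have hid := Cf_id hS
  refine ⟨?_, ?_, ?_, ?_⟩
  · have h1 : Cf hS (fun r => (r:ℂ)) * Cf hS pinv * Cf hS (fun r => (r:ℂ))
        = Cf hS (fun r => (r:ℂ)) := by
      rw [Cf_mul, Cf_mul]
      exact Cf_eq hS fun i => by
        by_cases h : hS.1.eigenvalues i = 0
        · simp [pinv, h]
        · simp [pinv, h]
    rwa [hid] at h1
  · have h1 : Cf hS pinv * Cf hS (fun r => (r:ℂ)) * Cf hS pinv = Cf hS pinv := by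
      rw [Cf_mul, Cf_mul]
      exact Cf_eq hS fun i => by
        by_cases h : hS.1.eigenvalues i = 0
        · simp [pinv, h]
        · simp [pinv, h]
    rwa [hid] at h1
  · have h1 : (Cf hS (fun r => (r:ℂ)) * Cf hS pinv).IsHermitian := by
      rw [Cf_mul]
      exact Cf_herm hS fun r => by
        by_cases h : r = 0
        · simp [pinv, h]
        · simp [pinv, h, mul_inv_cancel₀ (Complex.ofReal_ne_zero.mpr h)]
    rwa [hid] at h1
  · have h1 : (Cf hS pinv * Cf hS (fun r => (r:ℂ))).IsHermitian := by
      rw [Cf_mul]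
      exact Cf_herm hS fun r => by
        by_cases h : r = 0
        · simp [pinv, h]
        · simp [pinv, h, inv_mul_cancel₀ (Complex.ofReal_ne_zero.mpr h)]
    rwa [hid] at h1

lemma sqrt_eq_Cf : hS.sqrt = Cf hS sqf := by
  rfl

lemma sdh_eq_Cf {Sdh : Matrix (Fin n) (Fin n) ℂ} (hSdh : Sdh.PosSemidef)
    (hSdh2 : Sdh * Sdh = Cf hS pinv) : Sdh = Cf hS gf := by
  refine psd_eq_of_sq_eq_sq hSdh (Cf_psd hS fun r => ?_) ?_
  · simp only [gf]
    split
    · exact le_refl 0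
    · rw [← Complex.ofReal_inv]
      exact Complex.zero_le_real.mpr (inv_nonneg.mpr (Real.sqrt_nonneg r))
  · rw [pow_two, pow_two, hSdh2, Cf_mul]
    exact Cf_eq hS fun i => by
      by_cases h : hS.1.eigenvalues i = 0
      · simp [pinv, gf, h]
      · have hr := hS.eigenvalues_nonneg i
        simp only [pinv, gf, if_neg h, ← mul_inv, ← Complex.ofReal_mul,
          Real.mul_self_sqrt hr]

lemma sq_mul_sdh_Cf : Cf hS sqf * Cf hS gf = Cf hS (fun r => (r:ℂ)) * Cf hS pinv := by
  rw [Cf_mul, Cf_mul]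
  exact Cf_eq hS fun i => by
    by_cases h : hS.1.eigenvalues i = 0
    · simp [pinv, gf, sqf, h]
    · have hr : Real.sqrt (hS.1.eigenvalues i) ≠ 0 :=
        fun hc => h (by simpa [Real.sqrt_eq_zero (hS.eigenvalues_nonneg i)] using hc)
      simp only [pinv, gf, sqf, if_neg h,
        mul_inv_cancel₀ (Complex.ofReal_ne_zero.mpr hr),
        mul_inv_cancel₀ (Complex.ofReal_ne_zero.mpr h)]

lemma sdh_mul_sq_Cf : Cf hS gf * Cf hS sqf = Cf hS (fun r => (r:ℂ)) * Cf hS pinv := by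
  rw [Cf_mul, Cf_mul]
  exact Cf_eq hS fun i => by
    by_cases h : hS.1.eigenvalues i = 0
    · simp [pinv, gf, sqf, h]
    · have hr : Real.sqrt (hS.1.eigenvalues i) ≠ 0 :=
        fun hc => h (by simpa [Real.sqrt_eq_zero (hS.eigenvalues_nonneg i)] using hc)
      simp only [pinv, gf, sqf, if_neg h,
        inv_mul_cancel₀ (Complex.ofReal_ne_zero.mpr hr),
        mul_inv_cancel₀ (Complex.ofReal_ne_zero.mpr h)]

end SupProjAux

open SupProjAux in
/-- For orthogonal projections P and Q, P∨Q = P + Q - P₀. -/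
theorem sup_of_projections {n : ℕ} (P Q Sd Sdh Wh P₀ : Matrix (Fin n) (Fin n) ℂ)
    (hP : P.IsHermitian) (hP2 : P * P = P)
    (hQ : Q.IsHermitian) (hQ2 : Q * Q = Q)
    (hPpsd : P.PosSemidef) (hQpsd : Q.PosSemidef)
    (hSd : MPInv (P + Q) Sd)
    (hSdh : Sdh.PosSemidef) (hSdh2 : Sdh * Sdh = Sd)
    (hWh : Wh.PosSemidef)
    (hWh2 : Wh * Wh = Sdh * ((4 : ℂ)⁻¹ • (P + Q) - P * Sd * Q) * Sdh)
    (hP₀ : P₀.IsHermitian) (hP₀2 : P₀ * P₀ = P₀)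
    (hP₀range : LinearMap.range P₀.mulVecLin
      = LinearMap.range P.mulVecLin ⊓ LinearMap.range Q.mulVecLin) :
    (2 : ℂ)⁻¹ • (P + Q) + (hPpsd.add hQpsd).sqrt * Wh * (hPpsd.add hQpsd).sqrt
      = P + Q - P₀ := by
  have hS : (P + Q).PosSemidef := hPpsd.add hQpsd
  obtain ⟨m1, m2, m3, m4⟩ := hSd
  have hSdherm : Sdᴴ = Sd := by
    rw [← hSdh2, Matrix.conjTranspose_mul, hSdh.1.eq]
  -- commutation of S and Sd
  have hcomm : (P + Q) * Sd = Sd * (P + Q) := by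
    calc (P + Q) * Sd = ((P + Q) * Sd)ᴴ := m3.eq.symm
    _ = Sd * (P + Q) := by rw [Matrix.conjTranspose_mul, hSdherm, hS.1.eq]
  have hPiherm : ((P + Q) * Sd)ᴴ = (P + Q) * Sd := m3.eq
  have hSPi : (P + Q) * ((P + Q) * Sd) = P + Q := by
    rw [hcomm, ← Matrix.mul_assoc]; exact m1
  -- P and Q are fixed by Π
  have hEherm : (1 - (P + Q) * Sd)ᴴ = 1 - (P + Q) * Sd := by
    rw [Matrix.conjTranspose_sub, Matrix.conjTranspose_one, hPiherm]
  have hES : (1 - (P + Q) * Sd) * (P + Q) = 0 := by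
    rw [Matrix.sub_mul, Matrix.one_mul, m1, sub_self]
  have projE : ∀ (A : Matrix (Fin n) (Fin n) ℂ), A.PosSemidef → A * A = A →
      (∀ (B : Matrix (Fin n) (Fin n) ℂ), B.PosSemidef →
        (1 - (P+Q) * Sd) * (A + B) * (1 - (P+Q) * Sd)ᴴ = 0 →
      A * ((P + Q) * Sd) = A) := by
    intro A hA hA2 B hB hsum
    have hApart : (1 - (P+Q) * Sd) * A * (1 - (P+Q) * Sd)ᴴ = 0 := by
      apply psd_zero_of_add_eq_zero (hA.mul_mul_conjTranspose_same _)
        (hB.mul_mul_conjTranspose_same _)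
      rw [Matrix.mul_add, Matrix.add_mul] at hsum
      exact hsum
    have hAE : A * (1 - (P+Q) * Sd) = 0 := by
      rw [← Matrix.conjTranspose_mul_self_eq_zero]
      have : (A * (1 - (P+Q) * Sd))ᴴ * (A * (1 - (P+Q) * Sd))
          = (1 - (P+Q) * Sd) * A * (1 - (P+Q) * Sd)ᴴ := by
        rw [Matrix.conjTranspose_mul, hA.1.eq, hEherm]
        calc (1 - (P+Q) * Sd) * A * (A * (1 - (P+Q) * Sd))
            = (1 - (P+Q) * Sd) * ((A * A) * (1 - (P+Q) * Sd)) := by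
              simp only [Matrix.mul_assoc]
        _ = (1 - (P+Q) * Sd) * A * (1 - (P+Q) * Sd) := by
              rw [hA2, ← Matrix.mul_assoc]
      rw [this, hApart]
    have := sub_eq_zero.mp (by rwa [Matrix.mul_sub, Matrix.mul_one] at hAE)
    exact this.symm
  have hsumzero : (1 - (P+Q) * Sd) * (P + Q) * (1 - (P+Q) * Sd)ᴴ = 0 := by
    rw [hES, Matrix.zero_mul]
  have hPPi : P * ((P + Q) * Sd) = P := projE P hPpsd hP2 Q hQpsd hsumzero
  have hQPi : Q * ((P + Q) * Sd) = Q := by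
    apply projE Q hQpsd hQ2 P hPpsd
    rwa [add_comm Q P]
  have hPiP : ((P + Q) * Sd) * P = P := by
    calc ((P + Q) * Sd) * P = (P * ((P + Q) * Sd))ᴴ := by
          rw [Matrix.conjTranspose_mul, hPiherm, hP.eq]
    _ = P := by rw [hPPi, hP.eq]
  have hPiQ : ((P + Q) * Sd) * Q = Q := by
    calc ((P + Q) * Sd) * Q = (Q * ((P + Q) * Sd))ᴴ := by
          rw [Matrix.conjTranspose_mul, hPiherm, hQ.eq]
    _ = Q := by rw [hQPi, hQ.eq]
  -- P₀ is fixed by P and Q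
  have hP₀fix : ∀ x, x ∈ LinearMap.range P₀.mulVecLin → P₀ *ᵥ x = x := by
    rintro x ⟨y, rfl⟩
    rw [Matrix.mulVecLin_apply, Matrix.mulVec_mulVec, hP₀2]
  have hPfix : ∀ x, x ∈ LinearMap.range P.mulVecLin → P *ᵥ x = x := by
    rintro x ⟨y, rfl⟩
    rw [Matrix.mulVecLin_apply, Matrix.mulVec_mulVec, hP2]
  have hQfix : ∀ x, x ∈ LinearMap.range Q.mulVecLin → Q *ᵥ x = x := by
    rintro x ⟨y, rfl⟩
    rw [Matrix.mulVecLin_apply, Matrix.mulVec_mulVec, hQ2]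
  have hPP₀ : P * P₀ = P₀ := by
    apply eq_of_mulVec_eq; intro v
    rw [← Matrix.mulVec_mulVec]
    apply hPfix
    have h0 : P₀ *ᵥ v ∈ LinearMap.range P₀.mulVecLin := ⟨v, Matrix.mulVecLin_apply _ _⟩
    rw [hP₀range] at h0
    exact h0.1
  have hQP₀ : Q * P₀ = P₀ := by
    apply eq_of_mulVec_eq; intro v
    rw [← Matrix.mulVec_mulVec]
    apply hQfix
    have h0 : P₀ *ᵥ v ∈ LinearMap.range P₀.mulVecLin := ⟨v, Matrix.mulVecLin_apply _ _⟩
    rw [hP₀range] at h0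
    exact h0.2
  have hP₀P : P₀ * P = P₀ := by
    calc P₀ * P = (P * P₀)ᴴ := by rw [Matrix.conjTranspose_mul, hP.eq, hP₀.eq]
    _ = P₀ := by rw [hPP₀, hP₀.eq]
  have hP₀Q : P₀ * Q = P₀ := by
    calc P₀ * Q = (Q * P₀)ᴴ := by rw [Matrix.conjTranspose_mul, hQ.eq, hP₀.eq]
    _ = P₀ := by rw [hQP₀, hP₀.eq]
  have hSP₀ : (P + Q) * P₀ = (2:ℂ) • P₀ := by
    rw [Matrix.add_mul, hPP₀, hQP₀, two_smul]
  have hP₀S : P₀ * (P + Q) = (2:ℂ) • P₀ := by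
    rw [Matrix.mul_add, hP₀P, hP₀Q, two_smul]
  have hPiP0 : ((P + Q) * Sd) * P₀ = P₀ := by
    calc ((P + Q) * Sd) * P₀ = ((P + Q) * Sd) * (P * P₀) := by rw [hPP₀]
    _ = (((P + Q) * Sd) * P) * P₀ := by simp only [Matrix.mul_assoc]
    _ = P₀ := by rw [hPiP, hPP₀]
  have hP0Pi : P₀ * ((P + Q) * Sd) = P₀ := by
    calc P₀ * ((P + Q) * Sd) = (((P + Q) * Sd) * P₀)ᴴ := by
          rw [Matrix.conjTranspose_mul, hPiherm, hP₀.eq]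
    _ = P₀ := by rw [hPiP0, hP₀.eq]
  have hSdP₀ : Sd * P₀ = (2:ℂ)⁻¹ • P₀ := by
    have h3 : Sd * ((P + Q) * P₀) = P₀ := by
      rw [← Matrix.mul_assoc, ← hcomm]
      exact hPiP0
    rw [hSP₀, Matrix.mul_smul] at h3
    calc Sd * P₀ = (2:ℂ)⁻¹ • ((2:ℂ) • (Sd * P₀)) := by
          rw [smul_smul, inv_mul_cancel₀ (two_ne_zero), one_smul]
    _ = (2:ℂ)⁻¹ • P₀ := by rw [h3]
  have hP₀Sd : P₀ * Sd = (2:ℂ)⁻¹ • P₀ := by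
    calc P₀ * Sd = (Sd * P₀)ᴴ := by rw [Matrix.conjTranspose_mul, hSdherm, hP₀.eq]
    _ = (2:ℂ)⁻¹ • P₀ := by
        rw [hSdP₀, Matrix.conjTranspose_smul, star_half, hP₀.eq]
  -- Anderson-Duffin: P * Sd * Q = (1/2) P₀
  have e1 : P * Sd * Q + Q * Sd * Q = Q := by
    have : ((P + Q) * Sd) * Q = Q := hPiQ
    rw [Matrix.add_mul, Matrix.add_mul] at this
    exact this
  have e2 : Q * Sd * P + Q * Sd * Q = Q := by
    have h0 : Q * (Sd * (P + Q)) = Q := by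
      rw [← hcomm]; exact hQPi
    calc Q * Sd * P + Q * Sd * Q = Q * (Sd * (P + Q)) := by
          simp only [Matrix.mul_add, Matrix.mul_assoc]
    _ = Q := h0
  have hKsymm : P * Sd * Q = Q * Sd * P := add_right_cancel (e1.trans e2.symm)
  have hKherm : (P * Sd * Q)ᴴ = P * Sd * Q := by
    have : (P * Sd * Q)ᴴ = Q * Sd * P := by
      rw [Matrix.conjTranspose_mul, Matrix.conjTranspose_mul, hSdherm, hP.eq, hQ.eq,
        ← Matrix.mul_assoc]
    rw [this, hKsymm]
  have hKP₀ : (P * Sd * Q) * P₀ = (2:ℂ)⁻¹ • P₀ := by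
    calc (P * Sd * Q) * P₀ = (P * Sd) * (Q * P₀) := by rw [Matrix.mul_assoc]
    _ = P * (Sd * P₀) := by rw [hQP₀, Matrix.mul_assoc]
    _ = (2:ℂ)⁻¹ • (P * P₀) := by rw [hSdP₀, Matrix.mul_smul]
    _ = (2:ℂ)⁻¹ • P₀ := by rw [hPP₀]
  have hP₀K : P₀ * (P * Sd * Q) = (2:ℂ)⁻¹ • P₀ := by
    calc P₀ * (P * Sd * Q) = ((P * Sd * Q) * P₀)ᴴ := by
          rw [Matrix.conjTranspose_mul, hKherm, hP₀.eq]
    _ = (2:ℂ)⁻¹ • P₀ := by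
        rw [hKP₀, Matrix.conjTranspose_smul, star_half, hP₀.eq]
  have hP₀K' : P₀ * (P * Sd * Q) = P * Sd * Q := by
    apply eq_of_mulVec_eq; intro v
    rw [← Matrix.mulVec_mulVec]
    apply hP₀fix
    rw [hP₀range]
    constructor
    · exact ⟨(Sd * Q) *ᵥ v, by
        rw [Matrix.mulVecLin_apply, Matrix.mulVec_mulVec, ← Matrix.mul_assoc]⟩
    · exact ⟨(Sd * P) *ᵥ v, by
        rw [Matrix.mulVecLin_apply, Matrix.mulVec_mulVec, ← Matrix.mul_assoc, ← hKsymm]⟩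
  have hK : P * Sd * Q = (2:ℂ)⁻¹ • P₀ := by rw [← hP₀K', hP₀K]
  -- R := (1/2)(P+Q) - P₀ is PSD
  have hPmP₀ : (P - P₀).PosSemidef := by
    apply herm_proj_psd (hP.sub hP₀)
    rw [Matrix.sub_mul, Matrix.mul_sub, Matrix.mul_sub, hP2, hPP₀, hP₀P, hP₀2]
    abel
  have hQmP₀ : (Q - P₀).PosSemidef := by
    apply herm_proj_psd (hQ.sub hP₀)
    rw [Matrix.sub_mul, Matrix.mul_sub, Matrix.mul_sub, hQ2, hQP₀, hP₀Q, hP₀2]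
    abel
  have hR : ((2:ℂ)⁻¹ • (P + Q) - P₀).PosSemidef := by
    have hmod : (2:ℂ)⁻¹ • ((P - P₀) + (Q - P₀)) = (2:ℂ)⁻¹ • (P + Q) - P₀ := by
      module
    exact hmod ▸ psd_half (hPmP₀.add hQmP₀)
  -- Wh = Sdh * R * Sdh
  have hRSdR : ((2:ℂ)⁻¹ • (P + Q) - P₀) * Sd * ((2:ℂ)⁻¹ • (P + Q) - P₀)
      = (4:ℂ)⁻¹ • (P + Q) - (2:ℂ)⁻¹ • P₀ := by
    have step1 : ((2:ℂ)⁻¹ • (P + Q) - P₀) * Sd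
        = (2:ℂ)⁻¹ • ((P + Q) * Sd) - (2:ℂ)⁻¹ • P₀ := by
      rw [Matrix.sub_mul, Matrix.smul_mul, hP₀Sd]
    rw [step1, Matrix.sub_mul]
    simp only [Matrix.smul_mul, Matrix.mul_smul, Matrix.mul_sub, Matrix.sub_mul, smul_smul,
      smul_sub]
    rw [m1, hPiP0, hP₀S, hP₀2]
    module
  have hXpsd : (Sdh * ((2:ℂ)⁻¹ • (P + Q) - P₀) * Sdh).PosSemidef := by
    have := hR.mul_mul_conjTranspose_same Sdh
    rwa [hSdh.1.eq] at this
  have hWhX : Wh = Sdh * ((2:ℂ)⁻¹ • (P + Q) - P₀) * Sdh := by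
    apply psd_eq_of_sq_eq_sq hWh hXpsd
    rw [pow_two, pow_two, hWh2, hK]
    calc Sdh * ((4:ℂ)⁻¹ • (P + Q) - (2:ℂ)⁻¹ • P₀) * Sdh
        = Sdh * (((2:ℂ)⁻¹ • (P + Q) - P₀) * Sd * ((2:ℂ)⁻¹ • (P + Q) - P₀)) * Sdh := by
          rw [hRSdR]
    _ = Sdh * (((2:ℂ)⁻¹ • (P + Q) - P₀) * (Sdh * Sdh) * ((2:ℂ)⁻¹ • (P + Q) - P₀)) * Sdh := by
          rw [hSdh2]
    _ = (Sdh * ((2:ℂ)⁻¹ • (P + Q) - P₀) * Sdh) * (Sdh * ((2:ℂ)⁻¹ • (P + Q) - P₀) * Sdh) := by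
          simp only [Matrix.mul_assoc]
  -- sqrt(S) * Sdh = Π
  have hSdCf : Sd = Cf hS pinv := mpInv_unique ⟨m1, m2, m3, m4⟩ (mp_pinv hS)
  have hsqrt : (hPpsd.add hQpsd).sqrt = Cf hS sqf := sqrt_eq_Cf hS
  have hSdhCf : Sdh = Cf hS gf := sdh_eq_Cf hS hSdh (hSdh2.trans hSdCf)
  have hsqSdh : (hPpsd.add hQpsd).sqrt * Sdh = (P + Q) * Sd := by
    rw [hsqrt, hSdhCf, sq_mul_sdh_Cf, Cf_id, ← hSdCf]
  have hSdhsq : Sdh * (hPpsd.add hQpsd).sqrt = (P + Q) * Sd := by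
    rw [hsqrt, hSdhCf, sdh_mul_sq_Cf, Cf_id, ← hSdCf]
  -- finish
  have hfinal : (hPpsd.add hQpsd).sqrt * Wh * (hPpsd.add hQpsd).sqrt
      = (2:ℂ)⁻¹ • (P + Q) - P₀ := by
    rw [hWhX]
    calc (hPpsd.add hQpsd).sqrt * (Sdh * ((2:ℂ)⁻¹ • (P + Q) - P₀) * Sdh)
          * (hPpsd.add hQpsd).sqrt
        = ((hPpsd.add hQpsd).sqrt * Sdh) * ((2:ℂ)⁻¹ • (P + Q) - P₀)
          * (Sdh * (hPpsd.add hQpsd).sqrt) := by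
          simp only [Matrix.mul_assoc]
    _ = ((P + Q) * Sd) * ((2:ℂ)⁻¹ • (P + Q) - P₀) * ((P + Q) * Sd) := by
          rw [hsqSdh, hSdhsq]
    _ = ((2:ℂ)⁻¹ • (P + Q) - P₀) * ((P + Q) * Sd) := by
          rw [Matrix.mul_sub, Matrix.mul_smul, m1, hPiP0]
    _ = (2:ℂ)⁻¹ • (P + Q) - P₀ := by
          rw [Matrix.sub_mul, Matrix.smul_mul, hSPi, hP0Pi]
  rw [hfinal]
  module
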